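/- The free unital associative algebra U = T(x_1, x_2, …) on countably many generators is generic: for all l, k_1,…,k_n ≥ 0, the linear map ω_U from the free abelian group spanned by (l; k_1,…,k_n)-trees to the group of multilinear operations C^{k_1}(U;U) ⊗ … ⊗ C^{k_n}(U;U) → C^l(U;U), sending a tree T to the operation O_T, is injective (hence an isomorphism onto its image). -/

import Mathlib

/-- A planar rooted tree with legs labeled by natural numbers, `white`
vertices labeled by natural numbers, `black` vertices, and `special`
(arity 0) vertices.  The children lists record the planar structure. -/
inductive RTree : Type
  | leg : ℕ → RTree
  | special : RTree
  | white : ℕ → List RTree → RTree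
  | black : List RTree → RTree

mutual
  /-- Number of occurrences of the white label `i`. -/
  def whiteCount (i : ℕ) : RTree → ℕ
    | .leg _ => 0
    | .special => 0
    | .white j ts => (if j = i then 1 else 0) + whiteCountL i ts
    | .black ts => whiteCountL i ts
  def whiteCountL (i : ℕ) : List RTree → ℕ
    | [] => 0
    | t :: ts => whiteCount i t + whiteCountL i ts
end

mutual
  /-- Number of occurrences of the leg label `j`. -/
  def legCount (j : ℕ) : RTree → ℕ
    | .leg j' => if j' = j then 1 else 0
    | .special => 0
    | .white _ ts => legCountL j ts
    | .black ts => legCountL j ts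
  def legCountL (j : ℕ) : List RTree → ℕ
    | [] => 0
    | t :: ts => legCount j t + legCountL j ts
end

/-- A tree whose root is neither a black vertex nor a special vertex. -/
def RTree.notBlackOrSpecial : RTree → Prop
  | .black _ => False
  | .special => False
  | _ => True

mutual
  /-- Local well-formedness: white vertices have label `< n` and the arity
  prescribed by `k`; black vertices have arity `≥ 2` and no child which is a
  black or a special vertex (no edge connects two black vertices or a black
  vertex with a special vertex). -/
  def IsWF (n : ℕ) (k : ℕ → ℕ) : RTree → Prop
    | .leg _ => True
    | .special => True
    | .white j ts => j < n ∧ ts.length = k j ∧ IsWFL n k ts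
    | .black ts => 2 ≤ ts.length ∧ (∀ t ∈ ts, t.notBlackOrSpecial) ∧ IsWFL n k ts
  def IsWFL (n : ℕ) (k : ℕ → ℕ) : List RTree → Prop
    | [] => True
    | t :: ts => IsWF n k t ∧ IsWFL n k ts
end

/-- An `(l; k 0, …, k (n-1))`-tree: a well-formed planar tree whose white
vertices are labeled bijectively by `{0,…,n-1}` (with arities given by `k`)
and whose legs are labeled bijectively by `{0,…,l-1}`. -/
def IsTree (n l : ℕ) (k : ℕ → ℕ) (T : RTree) : Prop :=
  IsWF n k T
    ∧ (∀ i : ℕ, whiteCount i T = if i < n then 1 else 0)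
    ∧ (∀ j : ℕ, legCount j T = if j < l then 1 else 0)

mutual
  /-- Evaluation of the natural operation `O_T(f_1,…,f_n)(a_0,…,a_{l-1})`
  determined by a tree: the `i`-th white vertex is decorated by the Hochschild
  cochain `f i`, black vertices by the iterated multiplication, special
  vertices by the unit `1`, legs by the inputs `a`, and one composes along the
  tree. -/
  noncomputable def evalT (k : ℕ → ℕ)
      (f : ∀ i : ℕ, MultilinearMap ℤ (fun _ : Fin (k i) => FreeAlgebra ℤ ℕ) (FreeAlgebra ℤ ℕ))
      (a : ℕ → FreeAlgebra ℤ ℕ) : RTree → FreeAlgebra ℤ ℕ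
    | .leg j => a j
    | .special => 1
    | .white i ts => f i (fun s => (evalL k f a ts).getD s.val 1)
    | .black ts => (evalL k f a ts).prod
  noncomputable def evalL (k : ℕ → ℕ)
      (f : ∀ i : ℕ, MultilinearMap ℤ (fun _ : Fin (k i) => FreeAlgebra ℤ ℕ) (FreeAlgebra ℤ ℕ))
      (a : ℕ → FreeAlgebra ℤ ℕ) : List RTree → List (FreeAlgebra ℤ ℕ)
    | [] => []
    | t :: ts => evalT k f a t :: evalL k f a ts
end

/-!
Evaluate on the cochains `f_i(u_1, …, u_k) = y_i u_1 y_i u_2 ⋯ y_i u_k y_i` with `y_i = x_{2i+1}`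
and on the inputs `a_j = x_{2j}`. Then `O_T` is a single monomial, the word of `T`. Since each
letter `y_i` belongs to exactly one white vertex, `T` can be read back off its word: the first
letter identifies the root, and the occurrences of `y_i` cut the rest into the words of the
children of the white vertex `i`, followed by the words of its right siblings. Distinct trees
therefore give distinct monomials, and these are linearly independent in the free algebra.
-/

theorem List.ofFn_getD_eq_map {α β : Type*} {m : ℕ} (l : List α) (hl : l.length = m)
    (g : α → β) (d : α) : List.ofFn (fun s : Fin m => g (l.getD s d)) = l.map g := by
  subst hl
  simp [List.ofFn_getElem_eq_map]

theorem List.eq_of_map_eq_map_of_injOn {α β : Type*} {f : α → β} {S : Set α}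
    (hf : Set.InjOn f S) : ∀ {l l' : List α}, (∀ a ∈ l, a ∈ S) → (∀ a ∈ l', a ∈ S) →
      l.map f = l'.map f → l = l'
  | [], [], _, _, _ => rfl
  | a :: l, a' :: l', hl, hl', h => by
    simp only [List.map_cons, List.cons.injEq] at h
    simp only [List.mem_cons, forall_eq_or_imp] at hl hl'
    rw [hf hl.1 hl'.1 h.1, List.eq_of_map_eq_map_of_injOn hf hl.2 hl'.2 h.2]

theorem List.splitOn_flatten_map_append_singleton_append {α : Type*} [BEq α] [LawfulBEq α]
    {y : α} {r : List α} (hr : y ∉ r) :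
    ∀ {ws : List (List α)}, (∀ w ∈ ws, y ∉ w) →
      ((ws.map (· ++ [y])).flatten ++ r).splitOn y = ws ++ [r]
  | [], _ => by simpa using List.splitOn_eq_singleton hr
  | w :: ws, hws => by
    simp only [List.mem_cons, forall_eq_or_imp] at hws
    simp only [List.map_cons, List.flatten_cons, List.append_assoc, List.cons_append]
    rw [List.splitOn_append_cons_self_of_not_mem hws.1, List.nil_append,
      List.splitOn_flatten_map_append_singleton_append hr hws.2]

theorem FreeAlgebra.basisFreeMonoid_ofList (R : Type*) {X : Type*} [CommSemiring R]
    (w : List X) : basisFreeMonoid R X (FreeMonoid.ofList w) = (w.map (ι R)).prod := by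
  have hequiv : ∀ w : List X, equivMonoidAlgebraFreeMonoid (w.map (ι R)).prod =
      MonoidAlgebra.single (FreeMonoid.ofList w) (1 : R) := by
    intro w
    induction w with
    | nil =>
      simp only [List.map_nil, List.prod_nil, map_one, FreeMonoid.ofList_nil]
      rfl
    | cons x w ih =>
      rw [List.map_cons, List.prod_cons, map_mul, ih]
      simp [equivMonoidAlgebraFreeMonoid, MonoidAlgebra.single_mul_single]
  simp only [basisFreeMonoid, Module.Basis.map_apply, LinearEquiv.trans_symm,
    LinearEquiv.trans_apply, Finsupp.coe_basisSingleOne]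
  rw [LinearEquiv.symm_apply_eq, AlgEquiv.toLinearEquiv_apply, hequiv]
  rfl

noncomputable def MultilinearMap.interleave (R : Type*) {A : Type*} [CommSemiring R]
    [Semiring A] [Algebra R A] (y : A) (m : ℕ) : MultilinearMap R (fun _ : Fin m => A) A :=
  (LinearMap.mulLeft R y).compMultilinearMap
    ((MultilinearMap.mkPiAlgebraFin R m A).compLinearMap fun _ => LinearMap.mulRight R y)

theorem MultilinearMap.interleave_apply (R : Type*) {A : Type*} [CommSemiring R] [Semiring A]
    [Algebra R A] (y : A) (m : ℕ) (u : Fin m → A) :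
    interleave R y m u = y * (List.ofFn fun s => u s * y).prod := by
  simp [interleave]

namespace RTree

variable {n : ℕ} {k : ℕ → ℕ}

@[elab_as_elim]
theorem induction {P : RTree → Prop} (leg : ∀ j, P (.leg j)) (special : P .special)
    (white : ∀ i ts, (∀ t ∈ ts, P t) → P (.white i ts))
    (black : ∀ ts, (∀ t ∈ ts, P t) → P (.black ts)) : ∀ t, P t :=
  RTree.rec (motive_2 := fun ts => ∀ t ∈ ts, P t) leg special
    (fun i _ h => white i _ h) (fun _ h => black _ h) (by simp)
    (fun t ts ht hts => by simpa [ht] using hts)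

theorem isWFL_iff {ts : List RTree} :
    IsWFL n k ts ↔ ∀ t ∈ ts, IsWF n k t := by
  induction ts with
  | nil => simp [IsWFL]
  | cons t ts ih => simp [IsWFL, ih]

theorem whiteCountL_eq_sum (i : ℕ) (ts : List RTree) :
    whiteCountL i ts = (ts.map (whiteCount i)).sum := by
  induction ts with
  | nil => rfl
  | cons t ts ih => simp [whiteCountL, ih]

theorem whiteCountL_eq_zero_iff {i : ℕ} {ts : List RTree} :
    whiteCountL i ts = 0 ↔ ∀ t ∈ ts, whiteCount i t = 0 := by
  simp [whiteCountL_eq_sum, List.sum_eq_zero_iff]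

theorem evalL_eq_map (k : ℕ → ℕ)
    (f : ∀ i : ℕ, MultilinearMap ℤ (fun _ : Fin (k i) => FreeAlgebra ℤ ℕ) (FreeAlgebra ℤ ℕ))
    (a : ℕ → FreeAlgebra ℤ ℕ) (ts : List RTree) : evalL k f a ts = ts.map (evalT k f a) := by
  induction ts with
  | nil => rfl
  | cons t ts ih => simp [evalL, ih]

/-- Leg `j` is the letter `2 j`; the white vertex `i` is the letter `2 i + 1`, written before its
first child and after each child. -/
def word : RTree → List ℕ
  | .leg j => [2 * j]
  | .special => []
  | .white i ts => (2 * i + 1) :: (ts.map fun t => word t ++ [2 * i + 1]).flatten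
  | .black ts => (ts.map word).flatten

def forestWord (ts : List RTree) : List ℕ := (ts.map word).flatten

@[simp]
theorem forestWord_cons (t : RTree) (ts : List RTree) :
    forestWord (t :: ts) = t.word ++ forestWord ts := rfl

def factors : RTree → List RTree
  | .special => []
  | .black ts => ts
  | t => [t]

theorem forestWord_factors (t : RTree) : forestWord t.factors = t.word := by
  cases t <;> simp [factors, forestWord, word]

theorem whiteCountL_factors (i : ℕ) (t : RTree) : whiteCountL i t.factors = whiteCount i t := by
  cases t <;> simp [factors, whiteCountL, whiteCount]

theorem eq_of_factors_eq {t t' : RTree} (ht : IsWF n k t)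
    (ht' : IsWF n k t') (h : t.factors = t'.factors) : t = t' := by
  cases t <;> cases t' <;> simp only [factors, IsWF, List.cons.injEq, List.nil_eq,
    reduceCtorEq] at ht ht' h ⊢ <;> subst_vars <;> simp_all

theorem word_ne_nil {t : RTree} (ht : t.notBlackOrSpecial) : t.word ≠ [] := by
  cases t <;> simp_all [word, notBlackOrSpecial]

theorem notMem_word {i : ℕ} {t : RTree} (ht : whiteCount i t = 0) : 2 * i + 1 ∉ t.word := by
  induction t using RTree.induction with
  | leg j =>
    simp only [word, List.mem_cons, List.not_mem_nil, or_false]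
    omega
  | special => simp [word]
  | white j ts ih =>
    simp only [whiteCount, Nat.add_eq_zero_iff, ite_eq_right_iff, whiteCountL_eq_zero_iff] at ht
    have hji : j ≠ i := fun h => absurd (ht.1 h) one_ne_zero
    simp only [word, List.mem_cons, List.mem_flatten, List.mem_map]
    rintro (h | ⟨_, ⟨t, hts, rfl⟩, h⟩)
    · omega
    · rcases List.mem_append.mp h with h | h
      · exact ih t hts (ht.2 t hts) h
      · rw [List.mem_singleton] at h
        omega
  | black ts ih =>
    simp only [whiteCount, whiteCountL_eq_zero_iff] at ht
    simp only [word, List.mem_flatten, List.mem_map]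
    rintro ⟨_, ⟨t, hts, rfl⟩, h⟩
    exact ih t hts (ht t hts) h

theorem notMem_forestWord {i : ℕ} {ts : List RTree} (hts : whiteCountL i ts = 0) :
    2 * i + 1 ∉ forestWord ts := by
  rw [whiteCountL_eq_zero_iff] at hts
  simp only [forestWord, List.mem_flatten, List.mem_map]
  rintro ⟨_, ⟨t, ht, rfl⟩, h⟩
  exact notMem_word (hts t ht) h

theorem length_word_lt_of_mem {i : ℕ} {c : RTree} {cs : List RTree} (hc : c ∈ cs) :
    c.word.length < (white i cs).word.length := by
  have hsub := (List.sublist_flatten_of_mem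
    (List.mem_map_of_mem (f := fun t => word t ++ [2 * i + 1]) hc)).length_le
  simp only [List.length_append, List.length_singleton] at hsub
  simp only [word, List.length_cons]
  omega

def wellLabeled (n : ℕ) (k : ℕ → ℕ) : Set RTree :=
  {t | IsWF n k t ∧ ∀ i, whiteCount i t ≤ 1}

def IsFactorList (n : ℕ) (k : ℕ → ℕ) (ts : List RTree) : Prop :=
  (∀ t ∈ ts, IsWF n k t ∧ t.notBlackOrSpecial) ∧ ∀ i, whiteCountL i ts ≤ 1

theorem isFactorList_factors {t : RTree} (ht : t ∈ wellLabeled n k) :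
    IsFactorList n k t.factors := by
  obtain ⟨hwf, hu⟩ := ht
  refine ⟨?_, by simpa only [whiteCountL_factors] using hu⟩
  cases t <;> simp_all [factors, IsWF, isWFL_iff, notBlackOrSpecial]

theorem IsFactorList.tail {t : RTree} {ts : List RTree}
    (h : IsFactorList n k (t :: ts)) : IsFactorList n k ts :=
  ⟨fun u hu => h.1 u (List.mem_cons_of_mem t hu), fun i => by
    have := h.2 i
    simp only [whiteCountL] at this
    omega⟩

theorem IsFactorList.eq_nil {ts : List RTree} (h : IsFactorList n k ts)
    (hw : forestWord ts = []) : ts = [] := by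
  cases ts with
  | nil => rfl
  | cons t ts =>
    simp only [forestWord_cons, List.append_eq_nil_iff] at hw
    exact absurd hw.1 (word_ne_nil (h.1 t List.mem_cons_self).2)

theorem IsFactorList.mem_wellLabeled_of_mem_children {i : ℕ} {cs r : List RTree}
    {c : RTree} (h : IsFactorList n k (white i cs :: r)) (hc : c ∈ cs) :
    c ∈ wellLabeled n k := by
  obtain ⟨-, -, hwf⟩ := (h.1 _ List.mem_cons_self).1
  refine ⟨isWFL_iff.mp hwf c hc, fun j => ?_⟩
  have hle : whiteCount j c ≤ whiteCountL j cs := by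
    rw [whiteCountL_eq_sum]
    exact List.le_sum_of_mem (List.mem_map_of_mem hc)
  have := h.2 j
  simp only [whiteCountL, whiteCount] at this
  omega

theorem splitOn_tail_forestWord_white_cons {i : ℕ} {cs r : List RTree}
    (h : whiteCountL i (white i cs :: r) ≤ 1) :
    (forestWord (white i cs :: r)).tail.splitOn (2 * i + 1) = cs.map word ++ [forestWord r] := by
  simp only [whiteCountL, whiteCount, ↓reduceIte] at h
  have hcs : ∀ w ∈ cs.map word, 2 * i + 1 ∉ w := by
    simp only [List.mem_map, forall_exists_index, and_imp, forall_apply_eq_imp_iff₂]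
    exact fun c hc => notMem_word (whiteCountL_eq_zero_iff.mp (by omega) c hc)
  rw [forestWord_cons, word, List.cons_append, List.tail_cons,
    show cs.map (fun t => t.word ++ [2 * i + 1]) = (cs.map word).map (· ++ [2 * i + 1]) by simp,
    List.splitOn_flatten_map_append_singleton_append (notMem_forestWord (by omega)) hcs]

theorem eq_and_forestWord_eq_of_cons {N : ℕ} {t t' : RTree} {r r' : List RTree}
    (hinj : Set.InjOn word {c ∈ wellLabeled n k | c.word.length ≤ N})
    (h : IsFactorList n k (t :: r)) (h' : IsFactorList n k (t' :: r'))
    (hN : (forestWord (t :: r)).length ≤ N + 1)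
    (hw : forestWord (t :: r) = forestWord (t' :: r')) :
    t = t' ∧ forestWord r = forestWord r' := by
  have hchildren : ∀ {i cs r}, IsFactorList n k (white i cs :: r) →
      (forestWord (white i cs :: r)).length ≤ N + 1 →
        ∀ c ∈ cs, c ∈ {c ∈ wellLabeled n k | c.word.length ≤ N} :=
    fun {i} _ _ h hN c hc => ⟨h.mem_wellLabeled_of_mem_children hc, by
      have := length_word_lt_of_mem (i := i) hc
      rw [forestWord_cons, List.length_append] at hN
      omega⟩
  have hnb := (h.1 t List.mem_cons_self).2
  have hnb' := (h'.1 t' List.mem_cons_self).2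
  rcases t with j | _ | ⟨i, cs⟩ | _ <;> rcases t' with j' | _ | ⟨i', cs'⟩ | _ <;>
    simp only [notBlackOrSpecial] at hnb hnb'
  all_goals have hhead := hw; simp only [forestWord_cons, word, List.cons_append,
    List.cons.injEq] at hhead
  · exact ⟨by rw [show j = j' by omega], hhead.2⟩
  · omega
  · omega
  · obtain rfl : i = i' := by omega
    have hsplit := congrArg (fun w => w.tail.splitOn (2 * i + 1)) hw
    simp only [splitOn_tail_forestWord_white_cons (h.2 i),
      splitOn_tail_forestWord_white_cons (h'.2 i)] at hsplit
    obtain ⟨hcs, hr⟩ := List.append_inj' hsplit rfl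
    exact ⟨congrArg _ (List.eq_of_map_eq_map_of_injOn hinj (hchildren h hN)
      (hchildren h' (hw ▸ hN)) hcs), List.singleton_inj.mp hr⟩

theorem eq_of_forestWord_eq_of_length_le (N : ℕ) :
    ∀ {ts ts' : List RTree}, IsFactorList n k ts → IsFactorList n k ts' →
      (forestWord ts).length ≤ N → forestWord ts = forestWord ts' → ts = ts' := by
  induction N with
  | zero =>
    intro ts ts' h h' hN hw
    have hnil : forestWord ts = [] := List.eq_nil_of_length_eq_zero (by omega)
    rw [h.eq_nil hnil, h'.eq_nil (hw ▸ hnil)]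
  | succ N ih =>
    intro ts ts' h h' hN hw
    match ts, ts' with
    | [], ts' => exact (h'.eq_nil hw.symm).symm
    | ts, [] => exact h.eq_nil hw
    | t :: r, t' :: r' =>
      have hinj : Set.InjOn word {c ∈ wellLabeled n k | c.word.length ≤ N} :=
        fun c hc c' hc' hcc' => eq_of_factors_eq hc.1.1 hc'.1.1 <|
          ih (isFactorList_factors hc.1) (isFactorList_factors hc'.1)
            (by rw [forestWord_factors]; exact hc.2)
            (by rw [forestWord_factors, forestWord_factors, hcc'])
      obtain ⟨rfl, hr⟩ := eq_and_forestWord_eq_of_cons hinj h h' hN hw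
      have hlen : (forestWord r).length ≤ N := by
        have := List.length_pos_iff.mpr (word_ne_nil (h.1 t List.mem_cons_self).2)
        rw [forestWord_cons, List.length_append] at hN
        omega
      rw [ih h.tail h'.tail hlen hr]

theorem word_injOn (n : ℕ) (k : ℕ → ℕ) : Set.InjOn word (wellLabeled n k) :=
  fun t ht t' ht' hw => eq_of_factors_eq ht.1 ht'.1 <|
    eq_of_forestWord_eq_of_length_le _ (isFactorList_factors ht) (isFactorList_factors ht')
      le_rfl (by rw [forestWord_factors, forestWord_factors, hw])

theorem evalT_eq_prod_word
    {f : ∀ i : ℕ, MultilinearMap ℤ (fun _ : Fin (k i) => FreeAlgebra ℤ ℕ) (FreeAlgebra ℤ ℕ)}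
    (hf : ∀ i u, f i u = FreeAlgebra.ι ℤ (2 * i + 1) *
      (List.ofFn fun s => u s * FreeAlgebra.ι ℤ (2 * i + 1)).prod)
    {t : RTree} (ht : IsWF n k t) :
    evalT k f (fun j => FreeAlgebra.ι ℤ (2 * j)) t = (t.word.map (FreeAlgebra.ι ℤ)).prod := by
  induction t using RTree.induction with
  | leg j => simp [evalT, word]
  | special => simp [evalT, word]
  | white i ts ih =>
    obtain ⟨-, hlen, hwf⟩ := ht
    rw [evalT, hf, evalL_eq_map, List.ofFn_getD_eq_map _ (by rw [List.length_map, hlen])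
      (· * FreeAlgebra.ι ℤ (2 * i + 1)), List.map_map]
    simp only [word, List.map_cons, List.prod_cons, List.map_flatten, List.prod_flatten,
      List.map_map]
    congr 2
    refine List.map_congr_left fun t hts => ?_
    simp [ih t hts (isWFL_iff.mp hwf t hts)]
  | black ts ih =>
    obtain ⟨-, -, hwf⟩ := ht
    rw [evalT, evalL_eq_map]
    simp only [word, List.map_flatten, List.prod_flatten, List.map_map]
    congr 1
    exact List.map_congr_left fun t hts => ih t hts (isWFL_iff.mp hwf t hts)

end RTree

theorem free_algebra_is_generic (n l : ℕ) (k : ℕ → ℕ)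
    (s : Finset RTree) (hs : ∀ T ∈ s, IsTree n l k T) (c : RTree → ℤ)
    (hvanish : ∀ (f : ∀ i : ℕ,
        MultilinearMap ℤ (fun _ : Fin (k i) => FreeAlgebra ℤ ℕ) (FreeAlgebra ℤ ℕ))
      (a : ℕ → FreeAlgebra ℤ ℕ),
        (∑ T ∈ s, c T • evalT k f a T) = 0) :
    ∀ T ∈ s, c T = 0 := by
  have hwellLabeled : ∀ T ∈ s, T ∈ RTree.wellLabeled n k := fun T hT =>
    ⟨(hs T hT).1, fun i => by rw [(hs T hT).2.1 i]; split <;> omega⟩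
  have hindep : LinearIndepOn ℤ
      (fun T : RTree => FreeAlgebra.basisFreeMonoid ℤ ℕ (FreeMonoid.ofList T.word)) s :=
    ((FreeAlgebra.basisFreeMonoid ℤ ℕ).linearIndependent.linearIndepOn _).comp_of_image
      (FreeMonoid.ofList.injective.comp_injOn ((RTree.word_injOn n k).mono hwellLabeled))
  refine linearIndepOn_iff'.mp hindep s c subset_rfl ?_
  rw [← hvanish (fun i => .interleave ℤ (FreeAlgebra.ι ℤ (2 * i + 1)) (k i))
    (fun j => FreeAlgebra.ι ℤ (2 * j))]
  refine Finset.sum_congr rfl fun T hT => ?_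
  rw [FreeAlgebra.basisFreeMonoid_ofList, RTree.evalT_eq_prod_word
    (fun i => MultilinearMap.interleave_apply ℤ _ _) (hwellLabeled T hT).1]
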